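/- arXiv:1212.0529 — 3 statements merged into one kernel-verified Lean document; each statement's English description precedes it below -/
import Mathlib

section
/- Let $G_m(x) = \frac{1}{2}\int_0^\infty \frac{1}{u} e^{-\frac{m^2}{2}u - \frac{|x|^2}{2u}}\,du$ be the massive Green function on $\mathbb{R}^2$ and $k_m(z) = \frac{1}{2}\int_0^\infty e^{-\frac{m^2}{2v}|z|^2 - \frac{v}{2}}\,dv$. Then the convolution satisfies $G_m \star G_m(x) = \frac{\pi}{m^2} k_m(x)$ for all $x \in \mathbb{R}^2$. -/
open MeasureTheory

/-- The massive Green function on `ℝ²`. -/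
noncomputable def Gm (m : ℝ) (x : EuclideanSpace ℝ (Fin 2)) : ℝ :=
  ∫ u in Set.Ioi (0 : ℝ), Real.exp (-(m ^ 2 / 2) * u - ‖x‖ ^ 2 / (2 * u)) / (2 * u)

/-- The star-scale invariant kernel associated with the massive Green function. -/
noncomputable def km (m : ℝ) (z : EuclideanSpace ℝ (Fin 2)) : ℝ :=
  (1 / 2) * ∫ v in Set.Ioi (0 : ℝ), Real.exp (-(m ^ 2 / (2 * v)) * ‖z‖ ^ 2 - v / 2)

/-!
Write `p_t` for the heat kernel and `q_t = e^{-m²t/2} p_t`, so that `G_m = π ∫₀^∞ q_u du`.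
Completing the square gives Chapman–Kolmogorov, `q_u ⋆ q_v = q_{u+v}`, hence by Tonelli
`G_m ⋆ G_m(x) = π² ∫₀^∞∫₀^∞ q_{u+v}(x) du dv = π² ∫₀^∞ s q_s(x) ds`.
In the plane `s q_s(x) = e^{-m²s/2 - |x|²/2s} / 2π`, and the substitution `s = v/m²` turns
this into `(π/m²) k_m(x)`.

The interchanges are done for lower Lebesgue integrals, where Tonelli needs no integrability.
The time integral defining `G_m(0)` diverges, so `Gm m 0` is the junk value `0`; this is
harmless since finiteness of the final integral makes the convolution integrand finite a.e.
-/

open Real Set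
open scoped ENNReal

theorem lintegral_mul_lintegral_eq_lintegral_lintegral_lintegral {α β γ : Type*}
    [MeasurableSpace α] [MeasurableSpace β] [MeasurableSpace γ]
    {μ : Measure α} {ν : Measure β} {ρ : Measure γ} [SFinite μ] [SFinite ν] [SFinite ρ]
    {f : α → γ → ℝ≥0∞} {g : β → γ → ℝ≥0∞}
    (hf : Measurable (Function.uncurry f)) (hg : Measurable (Function.uncurry g)) :
    ∫⁻ z, (∫⁻ a, f a z ∂μ) * (∫⁻ b, g b z ∂ν) ∂ρ = ∫⁻ a, ∫⁻ b, ∫⁻ z, f a z * g b z ∂ρ ∂ν ∂μ := by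
  have hf' (z : γ) : Measurable fun a => f a z := hf.comp (measurable_id.prodMk measurable_const)
  have hg' (z : γ) : Measurable fun b => g b z := hg.comp (measurable_id.prodMk measurable_const)
  calc ∫⁻ z, (∫⁻ a, f a z ∂μ) * (∫⁻ b, g b z ∂ν) ∂ρ
      = ∫⁻ z, ∫⁻ a, ∫⁻ b, f a z * g b z ∂ν ∂μ ∂ρ := by
        simp_rw [← lintegral_mul_const _ (hf' _), ← lintegral_const_mul _ (hg' _)]
    _ = ∫⁻ a, ∫⁻ z, ∫⁻ b, f a z * g b z ∂ν ∂ρ ∂μ := by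
        refine lintegral_lintegral_swap (Measurable.aemeasurable ?_)
        exact Measurable.lintegral_prod_right'
          ((hf.comp (measurable_fst.snd.prodMk measurable_fst.fst)).mul
            (hg.comp (measurable_snd.prodMk measurable_fst.fst)))
    _ = ∫⁻ a, ∫⁻ b, ∫⁻ z, f a z * g b z ∂ρ ∂ν ∂μ := by
        refine lintegral_congr fun a => lintegral_lintegral_swap (Measurable.aemeasurable ?_)
        exact (hf.comp (measurable_const.prodMk measurable_fst)).mul
          (hg.comp (measurable_snd.prodMk measurable_fst))

theorem lintegral_Ioi_comp_const_add (H : ℝ → ℝ≥0∞) (u : ℝ) :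
    ∫⁻ v in Ioi 0, H (u + v) = ∫⁻ s in Ioi u, H s := by
  have := (measurePreserving_add_left volume u).setLIntegral_comp_preimage_emb
    (measurableEmbedding_addLeft u) H (Ioi u)
  rwa [preimage_const_add_Ioi, sub_self] at this

theorem lintegral_Ioi_lintegral_Ioi_add {H : ℝ → ℝ≥0∞} (hH : Measurable H) :
    ∫⁻ u in Ioi 0, ∫⁻ v in Ioi 0, H (u + v) = ∫⁻ s in Ioi 0, ENNReal.ofReal s * H s := by
  have hswap : Measurable (Function.uncurry fun u s => (Ioi u).indicator H s) :=
    (hH.comp measurable_snd).indicator (measurableSet_lt measurable_fst measurable_snd)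
  calc ∫⁻ u in Ioi 0, ∫⁻ v in Ioi 0, H (u + v)
      = ∫⁻ u in Ioi 0, ∫⁻ s in Ioi 0, (Ioi u).indicator H s := by
        refine setLIntegral_congr_fun measurableSet_Ioi fun u hu => ?_
        rw [lintegral_Ioi_comp_const_add, setLIntegral_indicator measurableSet_Ioi, Ioi_inter_Ioi,
          sup_eq_left.mpr (le_of_lt hu)]
    _ = ∫⁻ s in Ioi 0, ∫⁻ u in Ioi 0, (Iio s).indicator (fun _ => H s) u := by
        rw [lintegral_lintegral_swap hswap.aemeasurable]
        rfl
    _ = ∫⁻ s in Ioi 0, ENNReal.ofReal s * H s := by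
        refine setLIntegral_congr_fun measurableSet_Ioi fun s hs => ?_
        rw [setLIntegral_indicator measurableSet_Iio, inter_comm, Ioi_inter_Iio, setLIntegral_const,
          Real.volume_Ioo, sub_zero, mul_comm]

theorem lintegral_mul_sub_eq_of_convolution_semigroup {G : Type*} [MeasurableSpace G] [Sub G]
    [MeasurableSub G] {μ : Measure G} [SFinite μ] {f : ℝ → G → ℝ≥0∞}
    (hf : Measurable (Function.uncurry f)) (x : G)
    (hconv : ∀ u > 0, ∀ v > 0, ∫⁻ y, f u y * f v (x - y) ∂μ = f (u + v) x) :
    ∫⁻ y, (∫⁻ u in Ioi 0, f u y) * (∫⁻ v in Ioi 0, f v (x - y)) ∂μ =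
      ∫⁻ s in Ioi 0, ENNReal.ofReal s * f s x := by
  rw [lintegral_mul_lintegral_eq_lintegral_lintegral_lintegral (g := fun v y => f v (x - y)) hf
      (hf.comp (measurable_fst.prodMk (measurable_snd.const_sub x))),
    ← lintegral_Ioi_lintegral_Ioi_add (H := fun s => f s x)
      (hf.comp (measurable_id.prodMk measurable_const))]
  exact setLIntegral_congr_fun measurableSet_Ioi fun u hu =>
    setLIntegral_congr_fun measurableSet_Ioi fun v hv => hconv u hu v hv

theorem integral_toReal_mul_toReal {α : Type*} [MeasurableSpace α] {μ : Measure α}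
    {f g : α → ℝ≥0∞} (hf : Measurable f) (hg : Measurable g) (hfin : ∫⁻ a, f a * g a ∂μ ≠ ∞) :
    ∫ a, (f a).toReal * (g a).toReal ∂μ = (∫⁻ a, f a * g a ∂μ).toReal := by
  simp_rw [← ENNReal.toReal_mul]
  exact integral_toReal (hf.mul hg).aemeasurable (ae_lt_top (hf.mul hg) hfin)

theorem integrableOn_exp_neg_mul_sub_div_Ioi {c a : ℝ} (hc : 0 < c) (ha : 0 ≤ a) :
    IntegrableOn (fun s => exp (-c * s - a / s)) (Ioi 0) := by
  refine (exp_neg_integrableOn_Ioi 0 hc).mono' (by fun_prop) ?_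
  filter_upwards [ae_restrict_mem measurableSet_Ioi] with s hs
  rw [Real.norm_of_nonneg (exp_nonneg _), exp_le_exp, sub_le_self_iff]
  exact div_nonneg ha (le_of_lt hs)

section HeatKernel

variable {V : Type*} [NormedAddCommGroup V] [InnerProductSpace ℝ V]

noncomputable def heatKernel (t : ℝ) (x : V) : ℝ :=
  (2 * π * t) ^ (-(Module.finrank ℝ V / 2 : ℝ)) * exp (-‖x‖ ^ 2 / (2 * t))

theorem heatKernel_nonneg {t : ℝ} (ht : 0 < t) (x : V) : 0 ≤ heatKernel t x := by
  unfold heatKernel; positivity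

theorem heatKernel_mul_heatKernel_sub {u v : ℝ} (hu : 0 < u) (hv : 0 < v) (x y : V) :
    heatKernel u y * heatKernel v (x - y) =
      heatKernel (u + v) x * heatKernel (u * v / (u + v)) (y - (u / (u + v)) • x) := by
  have huv : 0 < u + v := by positivity
  have hexp : -‖y‖ ^ 2 / (2 * u) + -‖x - y‖ ^ 2 / (2 * v) =
      -‖x‖ ^ 2 / (2 * (u + v)) + -‖y - (u / (u + v)) • x‖ ^ 2 / (2 * (u * v / (u + v))) := by
    rw [norm_sub_sq_real, norm_sub_sq_real, norm_smul, real_inner_smul_right,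
      real_inner_comm x y, Real.norm_of_nonneg (by positivity : 0 ≤ u / (u + v))]
    field_simp
    ring
  have hconst : (2 * π * u) * (2 * π * v) = (2 * π * (u + v)) * (2 * π * (u * v / (u + v))) := by
    field_simp
  unfold heatKernel
  rw [mul_mul_mul_comm, ← mul_rpow (by positivity) (by positivity), ← exp_add, hconst, hexp,
    mul_rpow (by positivity) (by positivity), exp_add]
  ring

variable [FiniteDimensional ℝ V] [MeasurableSpace V] [BorelSpace V]

theorem integral_heatKernel {t : ℝ} (ht : 0 < t) : ∫ x : V, heatKernel t x = 1 := by
  have hb : 0 < 1 / (2 * t) := by positivity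
  have hexp (x : V) : exp (-‖x‖ ^ 2 / (2 * t)) = exp (-(1 / (2 * t)) * ‖x‖ ^ 2) := by ring_nf
  simp only [heatKernel, hexp, integral_const_mul, GaussianFourier.integral_rexp_neg_mul_sq_norm hb]
  rw [show π / (1 / (2 * t)) = 2 * π * t by field_simp, rpow_neg (by positivity),
    inv_mul_cancel₀ (by positivity)]

theorem integrable_heatKernel {t : ℝ} (ht : 0 < t) : Integrable (heatKernel (V := V) t) :=
  .of_integral_ne_zero (by rw [integral_heatKernel ht]; exact one_ne_zero)

theorem integrable_heatKernel_mul_heatKernel_sub {u v : ℝ} (hu : 0 < u) (hv : 0 < v) (x : V) :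
    Integrable fun y => heatKernel u y * heatKernel v (x - y) := by
  simp_rw [heatKernel_mul_heatKernel_sub hu hv x]
  exact ((integrable_heatKernel (by positivity)).comp_sub_right _).const_mul _

theorem integral_heatKernel_mul_heatKernel_sub {u v : ℝ} (hu : 0 < u) (hv : 0 < v) (x : V) :
    ∫ y, heatKernel u y * heatKernel v (x - y) = heatKernel (u + v) x := by
  simp_rw [heatKernel_mul_heatKernel_sub hu hv x]
  rw [integral_const_mul, integral_sub_right_eq_self (heatKernel _),
    integral_heatKernel (by positivity), mul_one]

end HeatKernel

section MassiveHeatKernel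

variable {V : Type*} [NormedAddCommGroup V] [InnerProductSpace ℝ V]

noncomputable def massiveHeatKernel (m t : ℝ) (x : V) : ℝ :=
  exp (-(m ^ 2 / 2) * t) * heatKernel t x

theorem massiveHeatKernel_nonneg (m : ℝ) {t : ℝ} (ht : 0 < t) (x : V) :
    0 ≤ massiveHeatKernel m t x :=
  mul_nonneg (exp_nonneg _) (heatKernel_nonneg ht x)

variable [MeasurableSpace V] [BorelSpace V]

theorem measurable_massiveHeatKernel (m : ℝ) :
    Measurable (Function.uncurry (massiveHeatKernel (V := V) m)) := by
  unfold Function.uncurry massiveHeatKernel heatKernel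
  fun_prop

variable [FiniteDimensional ℝ V]

theorem lintegral_massiveHeatKernel_mul_sub (m : ℝ) {u v : ℝ} (hu : 0 < u) (hv : 0 < v) (x : V) :
    ∫⁻ y, ENNReal.ofReal (massiveHeatKernel m u y) *
        ENNReal.ofReal (massiveHeatKernel m v (x - y)) =
      ENNReal.ofReal (massiveHeatKernel m (u + v) x) := by
  have hprod (y : V) : massiveHeatKernel m u y * massiveHeatKernel m v (x - y) =
      exp (-(m ^ 2 / 2) * (u + v)) * (heatKernel u y * heatKernel v (x - y)) := by
    simp only [massiveHeatKernel, mul_add, exp_add]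
    ring
  simp_rw [← ENNReal.ofReal_mul (massiveHeatKernel_nonneg m hu _), hprod]
  rw [← ofReal_integral_eq_lintegral_ofReal
      ((integrable_heatKernel_mul_heatKernel_sub hu hv x).const_mul _)
      (.of_forall fun y => mul_nonneg (exp_nonneg _)
        (mul_nonneg (heatKernel_nonneg hu y) (heatKernel_nonneg hv _))),
    integral_const_mul, integral_heatKernel_mul_heatKernel_sub hu hv, massiveHeatKernel]

theorem lintegral_lintegral_Ioi_massiveHeatKernel_mul_sub (m : ℝ) (x : V) :
    ∫⁻ y, (∫⁻ u in Ioi 0, ENNReal.ofReal (massiveHeatKernel m u y)) *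
        (∫⁻ v in Ioi 0, ENNReal.ofReal (massiveHeatKernel m v (x - y))) =
      ∫⁻ s in Ioi 0, ENNReal.ofReal (s * massiveHeatKernel m s x) := by
  rw [lintegral_mul_sub_eq_of_convolution_semigroup
    (measurable_massiveHeatKernel m).ennreal_ofReal x
    fun u hu v hv => lintegral_massiveHeatKernel_mul_sub m hu hv x]
  exact setLIntegral_congr_fun measurableSet_Ioi fun s hs => (ENNReal.ofReal_mul hs.le).symm

end MassiveHeatKernel

theorem heatKernel_euclideanSpace_two (t : ℝ) (x : EuclideanSpace ℝ (Fin 2)) :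
    heatKernel t x = exp (-‖x‖ ^ 2 / (2 * t)) / (2 * π * t) := by
  rw [heatKernel, finrank_euclideanSpace_fin]
  norm_num [rpow_neg_one, div_eq_inv_mul]

theorem Gm_eq_pi_mul_toReal_lintegral (m : ℝ) (y : EuclideanSpace ℝ (Fin 2)) :
    Gm m y = π * (∫⁻ u in Ioi 0, ENNReal.ofReal (massiveHeatKernel m u y)).toReal := by
  rw [← integral_eq_lintegral_of_nonneg_ae, ← integral_const_mul]
  · refine setIntegral_congr_fun measurableSet_Ioi fun u hu => ?_
    rw [massiveHeatKernel, heatKernel_euclideanSpace_two, sub_eq_add_neg, exp_add]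
    field_simp
  · filter_upwards [ae_restrict_mem measurableSet_Ioi] with u hu
    exact massiveHeatKernel_nonneg m hu y
  · exact ((measurable_massiveHeatKernel m).comp
      (measurable_id.prodMk measurable_const)).aestronglyMeasurable

theorem mul_massiveHeatKernel_euclideanSpace_two (m : ℝ) {s : ℝ} (hs : s ≠ 0)
    (x : EuclideanSpace ℝ (Fin 2)) :
    s * massiveHeatKernel m s x = exp (-(m ^ 2 / 2) * s - ‖x‖ ^ 2 / 2 / s) / (2 * π) := by
  rw [massiveHeatKernel, heatKernel_euclideanSpace_two, sub_eq_add_neg, exp_add]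
  field_simp

theorem integral_Ioi_exp_eq_km {m : ℝ} (hm : m ≠ 0) (x : EuclideanSpace ℝ (Fin 2)) :
    ∫ s in Ioi 0, exp (-(m ^ 2 / 2) * s - ‖x‖ ^ 2 / 2 / s) = 2 / m ^ 2 * km m x := by
  have hsub := integral_comp_mul_left_Ioi (fun s => exp (-(m ^ 2 / 2) * s - ‖x‖ ^ 2 / 2 / s)) 0
    (by positivity : 0 < (m ^ 2)⁻¹)
  rw [mul_zero, inv_inv, smul_eq_mul] at hsub
  have hkm : ∫ v in Ioi 0, exp (-(m ^ 2 / (2 * v)) * ‖x‖ ^ 2 - v / 2) =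
      ∫ v in Ioi 0, exp (-(m ^ 2 / 2) * ((m ^ 2)⁻¹ * v) - ‖x‖ ^ 2 / 2 / ((m ^ 2)⁻¹ * v)) := by
    refine setIntegral_congr_fun measurableSet_Ioi fun v hv => ?_
    congr 1
    field_simp
    ring
  rw [km, hkm, hsub]
  field_simp

theorem integrableOn_mul_massiveHeatKernel_euclideanSpace_two {m : ℝ} (hm : m ≠ 0)
    (x : EuclideanSpace ℝ (Fin 2)) :
    IntegrableOn (fun s => s * massiveHeatKernel m s x) (Ioi 0) := by
  refine IntegrableOn.congr_fun ((integrableOn_exp_neg_mul_sub_div_Ioi (a := ‖x‖ ^ 2 / 2)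
    (half_pos (pow_two_pos_of_ne_zero hm)) (by positivity)).div_const (2 * π)) (fun s hs => ?_)
    measurableSet_Ioi
  exact (mul_massiveHeatKernel_euclideanSpace_two m (ne_of_gt hs) x).symm

theorem integral_Ioi_mul_massiveHeatKernel_euclideanSpace_two {m : ℝ} (hm : m ≠ 0)
    (x : EuclideanSpace ℝ (Fin 2)) :
    ∫ s in Ioi 0, s * massiveHeatKernel m s x = km m x / (π * m ^ 2) := by
  rw [setIntegral_congr_fun measurableSet_Ioi fun s hs =>
      mul_massiveHeatKernel_euclideanSpace_two m (ne_of_gt hs) x,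
    integral_div, integral_Ioi_exp_eq_km hm]
  field_simp

/-- The massive Green function is a square-root convolution of `k_m`:
`G_m ⋆ G_m = (π/m²) k_m`. -/
theorem stmt6 (m : ℝ) (hm : 0 < m) (x : EuclideanSpace ℝ (Fin 2)) :
    ∫ y, Gm m y * Gm m (x - y) = (Real.pi / m ^ 2) * km m x := by
  set L : EuclideanSpace ℝ (Fin 2) → ℝ≥0∞ :=
    fun y => ∫⁻ u in Ioi 0, ENNReal.ofReal (massiveHeatKernel m u y)
  have hL : Measurable L :=
    ((measurable_massiveHeatKernel m).ennreal_ofReal.comp measurable_swap).lintegral_prod_right'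
  have hconv := lintegral_lintegral_Ioi_massiveHeatKernel_mul_sub m x
  have hint := integrableOn_mul_massiveHeatKernel_euclideanSpace_two hm.ne' x
  have hnonneg : 0 ≤ᵐ[volume.restrict (Ioi 0)] fun s => s * massiveHeatKernel m s x := by
    filter_upwards [ae_restrict_mem measurableSet_Ioi] with s hs
    exact mul_nonneg hs.le (massiveHeatKernel_nonneg m hs x)
  calc ∫ y, Gm m y * Gm m (x - y) = π ^ 2 * ∫ y, (L y).toReal * (L (x - y)).toReal := by
        simp_rw [Gm_eq_pi_mul_toReal_lintegral, ← integral_const_mul]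
        congr 1 with y
        ring
    _ = π ^ 2 * ∫ s in Ioi 0, s * massiveHeatKernel m s x := by
        rw [integral_toReal_mul_toReal (g := fun y => L (x - y)) hL
            (hL.comp (measurable_id.const_sub x)) (hconv ▸ hint.lintegral_lt_top.ne), hconv,
          integral_eq_lintegral_of_nonneg_ae hnonneg hint.aestronglyMeasurable]
    _ = π / m ^ 2 * km m x := by
        rw [integral_Ioi_mul_massiveHeatKernel_euclideanSpace_two hm.ne']
        field_simp
end

section
/- The massive Green function kernel on $\mathbb{R}^2$, $G_m(x) = \int_0^\infty e^{-\frac{m^2}{2}u - \frac{|x|^2}{2u}}\frac{du}{2u}$, can be written as a star-scale invariant kernel: $G_m(x) = \int_1^\infty \frac{k_m(u x)}{u}\,du$ where $k_m(z) = \frac{1}{2}\int_0^\infty e^{-\frac{m^2}{2v}|z|^2 - \frac{v}{2}}\,dv$. In particular $k_m(0)=1$. -/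
/-!
Substituting `v = m² u² s` in `k_m(u x)` writes `k_m(u x) / u = ∫_0^∞ F(u, s) ds` with the
nonnegative integrand `F(u, s) = (m²/2) u e^{-|x|²/(2s)} e^{-m² s u²/2}`, and the Gaussian
moment `∫_1^∞ u e^{-b u²} du = e^{-b}/(2b)` turns `∫_1^∞ F(u, s) du` into the integrand of
`G_m`. Tonelli exchanges the two integrations. At `x = 0` both sides diverge; the exchange is
carried out on lower Lebesgue integrals, so the two Bochner integrals still agree (both are `0`).
-/

open MeasureTheory

open Set Filter Real Topology

theorem integral_Ioi_mul_exp_neg_mul_sq {b : ℝ} (hb : 0 < b) (t : ℝ) :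
    ∫ u in Ioi t, u * exp (-b * u ^ 2) = exp (-b * t ^ 2) / (2 * b) := by
  have hderiv :
      ∀ u, HasDerivAt (fun u => -exp (-b * u ^ 2) / (2 * b)) (u * exp (-b * u ^ 2)) u := by
    intro u
    refine (((hasDerivAt_pow 2 u).const_mul (-b)).exp.neg.div_const (2 * b)).congr_deriv ?_
    field_simp
    ring
  have hlim : Tendsto (fun u => -exp (-b * u ^ 2) / (2 * b)) atTop (𝓝 0) := by
    have : Tendsto (fun u : ℝ => -b * u ^ 2) atTop atBot :=
      (tendsto_pow_atTop two_ne_zero).const_mul_atTop_of_neg (neg_lt_zero.mpr hb)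
    simpa using ((tendsto_exp_atBot.comp this).neg.div_const (2 * b))
  rw [integral_Ioi_of_hasDerivAt_of_tendsto' (fun u _ => hderiv u)
    (integrable_mul_exp_neg_mul_sq hb).integrableOn hlim]
  ring

theorem integrableOn_exp_neg_div_sub_mul {a b : ℝ} (ha : 0 ≤ a) (hb : 0 < b) :
    IntegrableOn (fun s => exp (-(a / s) - b * s)) (Ioi 0) := by
  refine (exp_neg_integrableOn_Ioi 0 hb).mono' (by fun_prop) ?_
  filter_upwards [ae_restrict_mem measurableSet_Ioi] with s hs
  rw [norm_of_nonneg (exp_pos _).le]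
  gcongr
  have : 0 ≤ a / s := div_nonneg ha (le_of_lt hs)
  linarith

/-- No integrability of `f` on the product is assumed: both sides are the `toReal` of the same
lower Lebesgue integral. -/
theorem integral_integral_swap_of_nonneg {α β : Type*} [MeasurableSpace α] [MeasurableSpace β]
    {μ : Measure α} {ν : Measure β} [SFinite μ] [SFinite ν] {f : α → β → ℝ}
    (hf : AEStronglyMeasurable (Function.uncurry f) (μ.prod ν))
    (hf0 : 0 ≤ᵐ[μ.prod ν] Function.uncurry f)
    (hx : ∀ᵐ x ∂μ, Integrable (f x) ν)
    (hy : ∀ᵐ y ∂ν, Integrable (fun x => f x y) μ) :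
    ∫ x, ∫ y, f x y ∂ν ∂μ = ∫ y, ∫ x, f x y ∂μ ∂ν := by
  have hx0 : ∀ᵐ x ∂μ, 0 ≤ᵐ[ν] f x := Measure.ae_ae_of_ae_prod hf0
  have hy0 : ∀ᵐ y ∂ν, 0 ≤ᵐ[μ] fun x => f x y :=
    Measure.ae_ae_of_ae_prod (Measure.measurePreserving_swap.quasiMeasurePreserving.ae hf0)
  have inner_x :
      ∀ᵐ x ∂μ, ENNReal.ofReal (∫ y, f x y ∂ν) = ∫⁻ y, ENNReal.ofReal (f x y) ∂ν := by
    filter_upwards [hx, hx0] with x h h0 using ofReal_integral_eq_lintegral_ofReal h h0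
  have inner_y :
      ∀ᵐ y ∂ν, ENNReal.ofReal (∫ x, f x y ∂μ) = ∫⁻ x, ENNReal.ofReal (f x y) ∂μ := by
    filter_upwards [hy, hy0] with y h h0 using ofReal_integral_eq_lintegral_ofReal h h0
  rw [integral_eq_lintegral_of_nonneg_ae (hx0.mono fun x h => integral_nonneg_of_ae h)
      hf.integral_prod_right',
    integral_eq_lintegral_of_nonneg_ae (hy0.mono fun y h => integral_nonneg_of_ae h)
      hf.prod_swap.integral_prod_right', lintegral_congr_ae inner_x, lintegral_congr_ae inner_y]
  exact congrArg ENNReal.toReal <|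
    lintegral_lintegral_swap (f := fun x y => ENNReal.ofReal (f x y))
      (ENNReal.measurable_ofReal.comp_aemeasurable hf.aemeasurable)

/-- The integrand of both iterated integrals: `u` is the scale and `s = v / (c u²)` the rescaled
variable of `k_m`. -/
noncomputable def starIntegrand (c a u s : ℝ) : ℝ :=
  c / 2 * u * exp (-(a / (2 * s)) - c * s / 2 * u ^ 2)

theorem starIntegrand_eq_mul_gaussian (c a u s : ℝ) :
    starIntegrand c a u s
      = c / 2 * exp (-(a / (2 * s))) * (u * exp (-(c * s / 2) * u ^ 2)) := by
  rw [starIntegrand, sub_eq_add_neg, exp_add]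
  ring_nf

theorem starIntegrand_eq_mul_exp (c a u s : ℝ) :
    starIntegrand c a u s = c / 2 * u * exp (-(a / 2 / s) - c * u ^ 2 / 2 * s) := by
  rw [starIntegrand]
  ring_nf

section StarIntegrand

variable {c a : ℝ}

theorem integrableOn_starIntegrand_Ioi_one (hc : 0 < c) {s : ℝ} (hs : 0 < s) :
    IntegrableOn (fun u => starIntegrand c a u s) (Ioi 1) := by
  simp only [starIntegrand_eq_mul_gaussian]
  exact ((integrable_mul_exp_neg_mul_sq (by positivity)).integrableOn).const_mul _

theorem integral_starIntegrand_Ioi_one (hc : 0 < c) {s : ℝ} (hs : 0 < s) :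
    ∫ u in Ioi 1, starIntegrand c a u s = exp (-(c / 2) * s - a / (2 * s)) / (2 * s) := by
  simp only [starIntegrand_eq_mul_gaussian]
  rw [integral_const_mul, integral_Ioi_mul_exp_neg_mul_sq (by positivity), sub_eq_add_neg,
    exp_add]
  field_simp

theorem integrableOn_starIntegrand_Ioi_zero (hc : 0 < c) (ha : 0 ≤ a) {u : ℝ} (hu : u ≠ 0) :
    IntegrableOn (fun s => starIntegrand c a u s) (Ioi 0) := by
  simp only [starIntegrand_eq_mul_exp]
  exact (integrableOn_exp_neg_div_sub_mul (by positivity) (by positivity)).const_mul _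

theorem integral_starIntegrand_swap (hc : 0 < c) (ha : 0 ≤ a) :
    ∫ s in Ioi 0, ∫ u in Ioi 1, starIntegrand c a u s
      = ∫ u in Ioi 1, ∫ s in Ioi 0, starIntegrand c a u s := by
  refine integral_integral_swap_of_nonneg (by unfold starIntegrand; fun_prop) ?_ ?_ ?_
  · rw [Measure.prod_restrict]
    refine ae_restrict_of_forall_mem (measurableSet_Ioi.prod measurableSet_Ioi) ?_
    rintro ⟨s, u⟩ ⟨-, hu : 1 < u⟩
    have : 0 < u := zero_lt_one.trans hu
    simp only [Pi.zero_apply, Function.uncurry_apply_pair, starIntegrand]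
    positivity
  · filter_upwards [ae_restrict_mem measurableSet_Ioi] with s hs
      using integrableOn_starIntegrand_Ioi_one hc hs
  · filter_upwards [ae_restrict_mem measurableSet_Ioi] with u hu
      using integrableOn_starIntegrand_Ioi_zero hc ha (zero_lt_one.trans hu).ne'

end StarIntegrand

theorem km_zero (m : ℝ) : km m 0 = 1 := by
  have h := integral_exp_mul_Ioi (a := -(1 / 2)) (by norm_num) 0
  simp only [km, norm_zero]
  rw [show (fun v : ℝ => exp (-(m ^ 2 / (2 * v)) * 0 ^ 2 - v / 2))
      = fun v => exp (-(1 / 2) * v) by funext v; ring_nf, h]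
  norm_num

theorem km_smul_div_eq {m : ℝ} (hm : m ≠ 0) (x : EuclideanSpace ℝ (Fin 2)) {u : ℝ}
    (hu : 0 < u) :
    km m (u • x) / u = ∫ s in Ioi 0, starIntegrand (m ^ 2) (‖x‖ ^ 2) u s := by
  have hb : 0 < m ^ 2 * u ^ 2 := by positivity
  have hsubst : ∀ s ∈ Ioi (0 : ℝ),
      exp (-(m ^ 2 / (2 * (m ^ 2 * u ^ 2 * s))) * ‖u • x‖ ^ 2 - m ^ 2 * u ^ 2 * s / 2)
        = exp (-(‖x‖ ^ 2 / (2 * s)) - m ^ 2 * s / 2 * u ^ 2) := by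
    intro s (hs : 0 < s)
    rw [norm_smul, norm_of_nonneg hu.le]
    field_simp
  have hscale := integral_comp_mul_left_Ioi'
    (fun v => exp (-(m ^ 2 / (2 * v)) * ‖u • x‖ ^ 2 - v / 2)) 0 hb
  rw [mul_zero] at hscale
  rw [km, ← hscale, smul_eq_mul, setIntegral_congr_fun measurableSet_Ioi hsubst]
  simp only [starIntegrand]
  rw [integral_const_mul]
  field_simp

/-- The massive Green function is a star-scale invariant kernel:
`G_m(x) = ∫_1^∞ k_m(u x)/u du`, and `k_m(0) = 1`. -/
theorem stmt7 (m : ℝ) (hm : 0 < m) :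
    (∀ x : EuclideanSpace ℝ (Fin 2),
      Gm m x = ∫ u in Set.Ioi (1 : ℝ), km m (u • x) / u) ∧ km m 0 = 1 := by
  refine ⟨fun x => ?_, km_zero m⟩
  have hc : 0 < m ^ 2 := by positivity
  calc Gm m x = ∫ s in Ioi 0, ∫ u in Ioi 1, starIntegrand (m ^ 2) (‖x‖ ^ 2) u s :=
        setIntegral_congr_fun measurableSet_Ioi fun s hs =>
          (integral_starIntegrand_Ioi_one hc hs).symm
    _ = ∫ u in Ioi 1, ∫ s in Ioi 0, starIntegrand (m ^ 2) (‖x‖ ^ 2) u s :=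
        integral_starIntegrand_swap hc (by positivity)
    _ = ∫ u in Ioi 1, km m (u • x) / u :=
        setIntegral_congr_fun measurableSet_Ioi fun u hu =>
          (km_smul_div_eq hm.ne' x (zero_lt_one.trans hu)).symm
end

section
/- Let $\varphi : \mathbb{R}_+ \to (0,1]$ be a function satisfying: there exist $s_0 > 0$ and $q, Q > 0$ with $Q \ge \frac{1+\sqrt 5}{2}$ such that $\varphi(s) \le \frac{1}{\sqrt 2}(s^{-2q} + \varphi(s^{1/2})^2)$ for all $s > s_0$. Then for all $s > s_0$ and $n \ge 0$: $\varphi(s^{2^n}) \le \frac{1}{\sqrt 2}\big(a_{n+1} s^{-q 2^{n+1}} + \varphi(s^{1/2})^{2^{n+1}}\big)$, where $a_1 = 1$, $a_{n+1} = a_n^2 + 1$. Consequently, for all $x > s$ (with $s = s_0 + Q^{1/q}$), $\varphi(x) \le \frac{1}{\sqrt 2}(x^{-\alpha} + x^{-\beta})$ with $\alpha = q - \frac{\ln Q}{\ln s} > 0$ and $\beta = -\frac{\ln \varphi(s^{1/2})}{\ln s}$, provided $\varphi(s^{1/2}) < 1$. -/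
/-!
Squaring the recursive inequality and using `(A + B)² ≤ 2(A² + B²)` turns the bound at `s^{2ⁿ}`
into the bound at `s^{2ⁿ⁺¹}`, with the coefficient `a` following `a ↦ a² + 1`; when `s^{2ⁿ⁺¹}`
falls below `s₀` we must have `s < 1`, and then the right-hand side is at least `1 ≥ φ`.
Since `Q ≥ (1 + √5)/2` gives `a_{n+1} ≤ Q^{2^{n+1}}`, the first term is at most
`(s^{2^{n+1}})^{-α}` and the second equals `(s^{2^{n+1}})^{-β}`; for `s^{2ⁿ} ≤ x < s^{2^{n+1}}`
monotonicity of `φ` then gives the polynomial decay.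
-/

open Real

theorem one_le_of_sq_add_one_rec {a : ℕ → ℝ} (ha1 : a 1 = 1)
    (harec : ∀ n, a (n + 1) = a n ^ 2 + 1) (n : ℕ) : 1 ≤ a (n + 1) := by
  induction n with
  | zero => exact ha1.ge
  | succ k ih => rw [harec]; nlinarith

-- The invariant is `a (n + 1) ≤ Q ^ (2 ^ (n + 1) - 1)`: the plain bound `a (n + 1) ≤ Q ^ 2 ^ (n + 1)`
-- does not survive the step `a ↦ a ^ 2 + 1`.
theorem mul_le_pow_two_pow_of_sq_add_one_rec {a : ℕ → ℝ} {Q : ℝ} (hQ : goldenRatio ≤ Q)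
    (ha1 : a 1 = 1) (harec : ∀ n, a (n + 1) = a n ^ 2 + 1) (n : ℕ) :
    Q * a (n + 1) ≤ Q ^ 2 ^ (n + 1) := by
  have hQ1 : 1 ≤ Q := one_lt_goldenRatio.le.trans hQ
  have hQsq : Q + 1 ≤ Q ^ 2 := by nlinarith [goldenRatio_sq, one_lt_goldenRatio]
  induction n with
  | zero => rw [ha1, mul_one, zero_add, pow_one]; nlinarith
  | succ k ih =>
    set X := Q ^ 2 ^ (k + 1)
    have hX : Q ^ 2 ≤ X := pow_le_pow_right₀ hQ1 (Nat.le_self_pow (by omega) 2)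
    have hsq : (Q * a (k + 1)) ^ 2 ≤ X ^ 2 :=
      pow_le_pow_left₀ (by nlinarith [one_le_of_sq_add_one_rec ha1 harec k]) ih 2
    have hX2 : Q ^ 2 ^ (k + 1 + 1) = X ^ 2 := by rw [pow_succ 2 (k + 1), pow_mul]
    rw [harec, hX2]
    nlinarith [mul_le_mul hX hX (by positivity) (by positivity)]

theorem sq_le_sq_add_sq_of_le_inv_sqrt_two_mul {x A B : ℝ} (hx : 0 ≤ x)
    (h : x ≤ 1 / √2 * (A + B)) : x ^ 2 ≤ A ^ 2 + B ^ 2 :=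
  calc x ^ 2 ≤ (1 / √2 * (A + B)) ^ 2 := pow_le_pow_left₀ hx h 2
    _ = (A + B) ^ 2 / 2 := by rw [mul_pow, div_pow, sq_sqrt zero_le_two]; ring
    _ ≤ A ^ 2 + B ^ 2 := by linarith [add_sq_le (a := A) (b := B)]

theorem one_le_iterate_bound_of_le_one {a : ℕ → ℝ} (ha1 : a 1 = 1)
    (harec : ∀ n, a (n + 1) = a n ^ 2 + 1) {s q P : ℝ} (hs0 : 0 < s) (hs1 : s ≤ 1) (hq : 0 ≤ q)
    (hP : 0 ≤ P) (k : ℕ) :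
    1 ≤ 1 / √2 * (a (k + 1 + 1) * s ^ (-(q * 2 ^ (k + 1 + 1))) + P ^ 2 ^ (k + 1 + 1)) := by
  have hpow : 1 ≤ s ^ (-(q * 2 ^ (k + 1 + 1))) :=
    one_le_rpow_of_pos_of_le_one_of_nonpos hs0 hs1 (by simp only [neg_nonpos]; positivity)
  have ha2 : 2 ≤ a (k + 1 + 1) := by
    rw [harec]; nlinarith [one_le_of_sq_add_one_rec ha1 harec k]
  have hsqrt : √2 ≤ 2 := by rw [sqrt_le_left zero_le_two]; norm_num
  rw [one_div, inv_mul_eq_div, one_le_div (by positivity)]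
  nlinarith [pow_nonneg hP (2 ^ (k + 1 + 1))]

theorem iterate_bound_of_rec {φ : ℝ → ℝ} {a : ℕ → ℝ} {s0 q : ℝ} (hφ0 : ∀ s, 0 ≤ φ s)
    (hφ1 : ∀ s, φ s ≤ 1) (ha1 : a 1 = 1) (harec : ∀ n, a (n + 1) = a n ^ 2 + 1)
    (hs0 : 0 ≤ s0) (hq : 0 ≤ q)
    (hrec : ∀ s, s0 < s → φ s ≤ 1 / √2 * (s ^ (-(2 * q)) + φ (s ^ ((1 : ℝ) / 2)) ^ 2))
    {s : ℝ} (hs : s0 < s) (n : ℕ) :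
    φ (s ^ (2 : ℝ) ^ n) ≤ 1 / √2 *
      (a (n + 1) * s ^ (-(q * 2 ^ (n + 1))) + φ (s ^ ((1 : ℝ) / 2)) ^ 2 ^ (n + 1)) := by
  have hs' : 0 < s := hs0.trans_lt hs
  induction n with
  | zero => simpa [ha1, mul_comm q] using hrec s hs
  | succ k ih =>
    set A := a (k + 1) * s ^ (-(q * 2 ^ (k + 1)))
    set B := φ (s ^ ((1 : ℝ) / 2)) ^ 2 ^ (k + 1)
    by_cases hS : s0 < s ^ (2 : ℝ) ^ (k + 1)
    · have e1 : (s ^ (2 : ℝ) ^ (k + 1)) ^ ((1 : ℝ) / 2) = s ^ (2 : ℝ) ^ k := by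
        rw [← rpow_mul hs'.le]; ring_nf
      have e2 : (s ^ (2 : ℝ) ^ (k + 1)) ^ (-(2 * q)) = s ^ (-(q * 2 ^ (k + 1 + 1))) := by
        rw [← rpow_mul hs'.le]; ring_nf
      have eA : A ^ 2 = a (k + 1) ^ 2 * s ^ (-(q * 2 ^ (k + 1 + 1))) := by
        rw [mul_pow, ← rpow_mul_natCast hs'.le]; push_cast; ring_nf
      have eB : B ^ 2 = φ (s ^ ((1 : ℝ) / 2)) ^ 2 ^ (k + 1 + 1) := by
        rw [← pow_mul, ← pow_succ]
      calc φ (s ^ (2 : ℝ) ^ (k + 1))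
          ≤ 1 / √2 * (s ^ (-(q * 2 ^ (k + 1 + 1))) + φ (s ^ (2 : ℝ) ^ k) ^ 2) := by
            simpa only [e1, e2] using hrec _ hS
        _ ≤ 1 / √2 * (s ^ (-(q * 2 ^ (k + 1 + 1))) + (A ^ 2 + B ^ 2)) := by
            gcongr; exact sq_le_sq_add_sq_of_le_inv_sqrt_two_mul (hφ0 _) ih
        _ = _ := by rw [harec, eA, eB]; ring
    · -- `s^{2^{k+1}} ≤ s₀ < s` forces `s < 1`, and then the right-hand side is at least `1`.
      have hs1 : s ≤ 1 := by
        by_contra! h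
        exact hS (hs.trans_le (self_le_rpow_of_one_le h.le (one_le_pow₀ one_le_two)))
      exact (hφ1 _).trans (one_le_iterate_bound_of_le_one ha1 harec hs' hs1 hq (hφ0 _) k)

theorem exists_rpow_two_pow_le_lt {s x : ℝ} (hs : 1 < s) (hx : s ≤ x) :
    ∃ n : ℕ, s ^ (2 : ℝ) ^ n ≤ x ∧ x < s ^ (2 : ℝ) ^ (n + 1) := by
  have hx0 : 0 < x := by linarith
  have hlog : 1 ≤ logb s x := (le_logb_iff_rpow_le hs hx0).2 (by simpa using hx)
  obtain ⟨n, hlo, hhi⟩ := exists_nat_pow_near hlog one_lt_two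
  have hsx : s ^ logb s x = x := rpow_logb (by linarith) hs.ne' hx0
  exact ⟨n, hsx ▸ rpow_le_rpow_of_exponent_le hs.le hlo,
    hsx ▸ rpow_lt_rpow_of_exponent_lt hs hhi⟩

theorem rpow_rpow_log_div_log {s P : ℝ} (hs0 : 0 < s) (hs1 : s ≠ 1) (hP : 0 < P) (t : ℝ) :
    (s ^ t) ^ (log P / log s) = P ^ t := by
  rw [← rpow_mul hs0.le, mul_comm, rpow_mul hs0.le, log_div_log, rpow_logb hs0 hs1 hP]

theorem rpow_rpow_neg_sub_log_div_log {s Q : ℝ} (hs0 : 0 < s) (hs1 : s ≠ 1) (hQ : 0 < Q)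
    (q t : ℝ) : (s ^ t) ^ (-(q - log Q / log s)) = Q ^ t * s ^ (-(q * t)) := by
  rw [neg_sub, sub_eq_add_neg, rpow_add (rpow_pos_of_pos hs0 t),
    rpow_rpow_log_div_log hs0 hs1 hQ, ← rpow_mul hs0.le, mul_neg, mul_comm t]

theorem log_div_log_lt_of_rpow_one_div_lt {s q Q : ℝ} (hQ : 0 < Q) (hs : 1 < s) (hq : 0 < q)
    (h : Q ^ (1 / q) < s) : log Q / log s < q := by
  rw [div_lt_iff₀ (log_pos hs), ← log_rpow (by linarith)]
  rw [one_div] at h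
  exact log_lt_log hQ ((rpow_inv_lt_iff_of_pos hQ.le (by linarith) hq).1 h)

theorem le_rpow_add_rpow_of_iterate_bound {φ : ℝ → ℝ} (hmono : Antitone φ) {a : ℕ → ℝ}
    {c s q Q P : ℝ} (hc : 0 ≤ c) (hs : 1 < s) (hQ : 0 < Q) (hP : 0 < P) (hP1 : P ≤ 1)
    (hα : log Q / log s ≤ q) (ha : ∀ n, a (n + 1) ≤ Q ^ 2 ^ (n + 1))
    (hiter : ∀ n, φ (s ^ (2 : ℝ) ^ n) ≤
      c * (a (n + 1) * s ^ (-(q * 2 ^ (n + 1))) + P ^ 2 ^ (n + 1)))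
    {x : ℝ} (hx : s ≤ x) :
    φ x ≤ c * (x ^ (-(q - log Q / log s)) + x ^ (log P / log s)) := by
  have hs0 : 0 < s := by linarith
  have hx0 : 0 < x := by linarith
  obtain ⟨n, hlo, hhi⟩ := exists_rpow_two_pow_le_lt hs hx
  have hcast : ((2 ^ (n + 1) : ℕ) : ℝ) = 2 ^ (n + 1) := by norm_cast
  have hfirst : a (n + 1) * s ^ (-(q * 2 ^ (n + 1))) ≤ x ^ (-(q - log Q / log s)) :=
    calc a (n + 1) * s ^ (-(q * 2 ^ (n + 1)))
        ≤ Q ^ 2 ^ (n + 1) * s ^ (-(q * 2 ^ (n + 1))) := by gcongr; exact ha n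
      _ = (s ^ (2 : ℝ) ^ (n + 1)) ^ (-(q - log Q / log s)) := by
        rw [rpow_rpow_neg_sub_log_div_log hs0 hs.ne' hQ, ← hcast, rpow_natCast]
      _ ≤ x ^ (-(q - log Q / log s)) := rpow_le_rpow_of_nonpos hx0 hhi.le (by linarith)
  have hsecond : P ^ 2 ^ (n + 1) ≤ x ^ (log P / log s) :=
    calc P ^ 2 ^ (n + 1) = (s ^ (2 : ℝ) ^ (n + 1)) ^ (log P / log s) := by
          rw [rpow_rpow_log_div_log hs0 hs.ne' hP, ← hcast, rpow_natCast]
      _ ≤ x ^ (log P / log s) := rpow_le_rpow_of_nonpos hx0 hhi.le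
          (div_nonpos_of_nonpos_of_nonneg (log_nonpos hP.le hP1) (log_nonneg hs.le))
  calc φ x ≤ φ (s ^ (2 : ℝ) ^ n) := hmono hlo
    _ ≤ _ := hiter n
    _ ≤ _ := by gcongr

/-- Bootstrap of the recursive inequality
`φ(s) ≤ (1/√2)(s^{-2q} + φ(s^{1/2})²)` for `s > s₀`: by induction,
`φ(s^{2ⁿ}) ≤ (1/√2)(a_{n+1} s^{-q·2^{n+1}} + φ(s^{1/2})^{2^{n+1}})`, and
consequently polynomial decay `φ(x) ≤ (1/√2)(x^{-α} + x^{-β})` for `x > s`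
with `s = s₀ + Q^{1/q}`, `α = q - ln Q/ln s > 0`, `β = -ln φ(s^{1/2})/ln s`. -/
theorem stmt17 (φ : ℝ → ℝ) (hpos : ∀ s, 0 < φ s) (hle1 : ∀ s, φ s ≤ 1)
    (hmono : Antitone φ)
    (a : ℕ → ℝ) (ha1 : a 1 = 1) (harec : ∀ n, a (n + 1) = a n ^ 2 + 1)
    (s0 q Q : ℝ) (hs0 : 0 < s0) (hq : 0 < q) (hQ : (1 + Real.sqrt 5) / 2 ≤ Q)
    (hrec : ∀ s, s0 < s →
      φ s ≤ (1 / Real.sqrt 2) * (s ^ (-(2 * q)) + φ (s ^ ((1 : ℝ) / 2)) ^ 2)) :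
    (∀ s, s0 < s → ∀ n : ℕ,
      φ (s ^ ((2 : ℝ) ^ n)) ≤ (1 / Real.sqrt 2) *
        (a (n + 1) * s ^ (-(q * 2 ^ (n + 1))) +
          φ (s ^ ((1 : ℝ) / 2)) ^ 2 ^ (n + 1))) ∧
    (∀ s : ℝ, s = s0 + Q ^ (1 / q) →
      φ (s ^ ((1 : ℝ) / 2)) < 1 →
      0 < q - Real.log Q / Real.log s ∧
      ∀ x, s < x →
        φ x ≤ (1 / Real.sqrt 2) *
          (x ^ (-(q - Real.log Q / Real.log s)) +
            x ^ (Real.log (φ (s ^ ((1 : ℝ) / 2))) / Real.log s))) := by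
  have hiter := fun s (hs : s0 < s) ↦
    iterate_bound_of_rec (fun s ↦ (hpos s).le) hle1 ha1 harec hs0.le hq.le hrec hs
  refine ⟨hiter, fun s hs _ ↦ ?_⟩
  have hQ1 : 1 < Q := one_lt_goldenRatio.trans_le hQ
  have hQr : 1 ≤ Q ^ (1 / q) := one_le_rpow hQ1.le (one_div_pos.2 hq).le
  have hQs : Q ^ (1 / q) < s := by linarith
  have hs1 : 1 < s := by linarith
  have hs0s : s0 < s := by linarith
  have hα : log Q / log s < q := log_div_log_lt_of_rpow_one_div_lt (by linarith) hs1 hq hQs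
  have ha : ∀ n, a (n + 1) ≤ Q ^ 2 ^ (n + 1) := fun n ↦
    (le_mul_of_one_le_left (by linarith [one_le_of_sq_add_one_rec ha1 harec n]) hQ1.le).trans
      (mul_le_pow_two_pow_of_sq_add_one_rec hQ ha1 harec n)
  exact ⟨sub_pos.2 hα, fun x hx ↦ le_rpow_add_rpow_of_iterate_bound hmono (by positivity) hs1
    (by linarith) (hpos _) (hle1 _) hα.le ha (hiter s hs0s) hx.le⟩
end
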